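/- On a probability space, in the multilayer e-filter setting with null structure, suppose the e_g^(m) are nonnegative real random variables such that for every m ∈ [M], Σ_{g∈H0^(m)} E[e_g^(m)] ≤ G^(m) (i.e., the layer-m e-values form a set of relaxed e-values). Let S be the output of the generalized e-filter at levels α^(1),…,α^(M) ∈ (0,1). Then for every m ∈ [M], FDR^(m) ≤ α^(m). -/

import Mathlib

open scoped ENNReal
open Filter MeasureTheory

namespace MultilayerEFilter

variable {N M : ℕ} {G : Fin M → ℕ}

/-- Candidate selection set `S(t) = {j : e_{h(m,j)}^(m) ≥ t^(m) for all m}`. -/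
noncomputable def sel (h : (m : Fin M) → Fin N → Fin (G m))
    (e : (m : Fin M) → Fin (G m) → ℝ≥0∞) (t : Fin M → ℝ≥0∞) : Finset (Fin N) :=
  Finset.univ.filter fun j => ∀ m, t m ≤ e m (h m j)

/-- Induced group selection `S^(m) = {g : A_g^(m) ∩ S ≠ ∅}`. -/
noncomputable def selGrp (A : (m : Fin M) → Fin (G m) → Finset (Fin N))
    (S : Finset (Fin N)) (m : Fin M) : Finset (Fin (G m)) :=
  Finset.univ.filter fun g => ∃ j ∈ A m g, j ∈ S

/-- Estimated FDP at layer `m`: `(G^(m)/t^(m)) / (|S^(m)(t)| ∨ 1)` (with `G/∞ = 0`). -/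
noncomputable def FDPhat (A : (m : Fin M) → Fin (G m) → Finset (Fin N))
    (h : (m : Fin M) → Fin N → Fin (G m))
    (e : (m : Fin M) → Fin (G m) → ℝ≥0∞) (t : Fin M → ℝ≥0∞) (m : Fin M) : ℝ≥0∞ :=
  ((G m : ℝ≥0∞) / t m) / ((max (selGrp A (sel h e t) m).card 1 : ℕ) : ℝ≥0∞)

/-- Admissible threshold vectors. -/
noncomputable def admissible (A : (m : Fin M) → Fin (G m) → Finset (Fin N))
    (h : (m : Fin M) → Fin N → Fin (G m))
    (e : (m : Fin M) → Fin (G m) → ℝ≥0∞) (α : Fin M → ℝ) : Set (Fin M → ℝ≥0∞) :=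
  {t | (∀ m, 1 ≤ t m) ∧ ∀ m, FDPhat A h e t m ≤ ENNReal.ofReal (α m)}

/-- Threshold of the generalized e-filter: coordinatewise minimum over admissible vectors. -/
noncomputable def filterThreshold (A : (m : Fin M) → Fin (G m) → Finset (Fin N))
    (h : (m : Fin M) → Fin N → Fin (G m))
    (e : (m : Fin M) → Fin (G m) → ℝ≥0∞) (α : Fin M → ℝ) (m : Fin M) : ℝ≥0∞ :=
  sInf {s | ∃ t ∈ admissible A h e α, t m = s}

/-- Output of the generalized e-filter. -/
noncomputable def output (A : (m : Fin M) → Fin (G m) → Finset (Fin N))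
    (h : (m : Fin M) → Fin N → Fin (G m))
    (e : (m : Fin M) → Fin (G m) → ℝ≥0∞) (α : Fin M → ℝ) : Finset (Fin N) :=
  sel h e (filterThreshold A h e α)

/-- Null groups at layer `m`: groups entirely contained in the null feature set. -/
def nullGrp (A : (m : Fin M) → Fin (G m) → Finset (Fin N))
    (H0 : Finset (Fin N)) (m : Fin M) : Finset (Fin (G m)) :=
  Finset.univ.filter fun g => A m g ⊆ H0

/-- Layer-`m` false discovery proportion of a selected feature set. -/
noncomputable def FDP (A : (m : Fin M) → Fin (G m) → Finset (Fin N))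
    (H0 : Finset (Fin N)) (S : Finset (Fin N)) (m : Fin M) : ℝ≥0∞ :=
  ((selGrp A S m ∩ nullGrp A H0 m).card : ℝ≥0∞) /
    ((max (selGrp A S m).card 1 : ℕ) : ℝ≥0∞)

end MultilayerEFilter

/-!
Write `t̂` for the e-filter threshold and `D = |S^(m)(t̂)| ∨ 1`. Every admissible `u` lies above `t̂`,
so it selects fewer groups and `G^(m) ≤ α^(m) D u^(m)`; taking the infimum over `u` gives
`G^(m) ≤ α^(m) D t̂^(m)`. Every selected null group has `e_g^(m) ≥ t̂^(m)`, hence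
`G^(m) · FDP^(m) ≤ α^(m) Σ_{g ∈ H0^(m)} e_g^(m)` pointwise, and taking expectations with the
relaxed e-value condition gives `FDR^(m) ≤ α^(m)`. Attainment of the minimum defining `t̂` is
never needed.
-/

namespace MultilayerEFilter

section

variable {N M : ℕ} {G : Fin M → ℕ} {A : (m : Fin M) → Fin (G m) → Finset (Fin N)}
  {h : (m : Fin M) → Fin N → Fin (G m)} {e : (m : Fin M) → Fin (G m) → ℝ≥0∞}

@[simp]
lemma mem_sel {t : Fin M → ℝ≥0∞} {j : Fin N} : j ∈ sel h e t ↔ ∀ m, t m ≤ e m (h m j) := by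
  simp [sel]

@[simp]
lemma mem_selGrp {S : Finset (Fin N)} {m : Fin M} {g : Fin (G m)} :
    g ∈ selGrp A S m ↔ ∃ j ∈ A m g, j ∈ S := by
  simp [selGrp]

lemma sel_anti {t u : Fin M → ℝ≥0∞} (htu : t ≤ u) : sel h e u ⊆ sel h e t := by
  intro j hj
  simp only [mem_sel] at hj ⊢
  exact fun m => (htu m).trans (hj m)

lemma selGrp_mono {S T : Finset (Fin N)} (hST : S ⊆ T) (m : Fin M) :
    selGrp A S m ⊆ selGrp A T m := by
  intro g hg
  obtain ⟨j, hjA, hjS⟩ := mem_selGrp.1 hg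
  exact mem_selGrp.2 ⟨j, hjA, hST hjS⟩

lemma FDP_eq_zero_of_eq_zero (H0 S : Finset (Fin N)) {m : Fin M} (hG : G m = 0) :
    FDP A H0 S m = 0 := by
  have : IsEmpty (Fin (G m)) := by rw [hG]; infer_instance
  simp [FDP, Finset.eq_empty_of_isEmpty (selGrp A S m)]

variable {α : Fin M → ℝ}

lemma filterThreshold_le {u : Fin M → ℝ≥0∞} (hu : u ∈ admissible A h e α) :
    filterThreshold A h e α ≤ u :=
  fun _ => sInf_le ⟨u, hu, rfl⟩

lemma sel_subset_output {u : Fin M → ℝ≥0∞} (hu : u ∈ admissible A h e α) :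
    sel h e u ⊆ output A h e α :=
  sel_anti (filterThreshold_le hu)

lemma natCast_le_mul_of_mem_admissible {m : Fin M} (hα : 0 < α m) {u : Fin M → ℝ≥0∞}
    (hu : u ∈ admissible A h e α) :
    (G m : ℝ≥0∞) ≤
      ENNReal.ofReal (α m) * (max (selGrp A (sel h e u) m).card 1 : ℕ) * u m := by
  have hD : ((max (selGrp A (sel h e u) m).card 1 : ℕ) : ℝ≥0∞) ≠ 0 := by positivity
  have hu0 : u m ≠ 0 := (zero_lt_one.trans_le (hu.1 m)).ne'
  have hFDP := hu.2 m
  rw [FDPhat, ENNReal.div_le_iff_le_mul (.inl hD) (.inl (ENNReal.natCast_ne_top _)),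
    ENNReal.div_le_iff_le_mul (.inl hu0) (.inr (by positivity))] at hFDP
  exact hFDP

lemma natCast_le_mul_filterThreshold {m : Fin M} (hα : 0 < α m) :
    (G m : ℝ≥0∞) ≤ ENNReal.ofReal (α m) *
      (max (selGrp A (output A h e α) m).card 1 : ℕ) * filterThreshold A h e α m := by
  set c := ENNReal.ofReal (α m) * (max (selGrp A (output A h e α) m).card 1 : ℕ) with hc_def
  have hc0 : c ≠ 0 := by positivity
  have hc : c ≠ ∞ := ENNReal.mul_ne_top ENNReal.ofReal_ne_top (ENNReal.natCast_ne_top _)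
  rw [mul_comm, ← ENNReal.div_le_iff_le_mul (.inl hc0) (.inl hc)]
  refine le_sInf ?_
  rintro _ ⟨u, hu, rfl⟩
  rw [ENNReal.div_le_iff_le_mul (.inl hc0) (.inl hc), mul_comm]
  refine (natCast_le_mul_of_mem_admissible hα hu).trans ?_
  rw [hc_def]
  gcongr
  exact selGrp_mono (sel_subset_output hu) m

variable (hdisj : ∀ m, ∀ g₁ g₂ : Fin (G m), g₁ ≠ g₂ → Disjoint (A m g₁) (A m g₂))
  (hmem : ∀ m j, j ∈ A m (h m j))
include hdisj hmem

lemma le_of_mem_selGrp_sel {t : Fin M → ℝ≥0∞} {m : Fin M} {g : Fin (G m)}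
    (hg : g ∈ selGrp A (sel h e t) m) : t m ≤ e m g := by
  obtain ⟨j, hjA, hjS⟩ := mem_selGrp.1 hg
  obtain rfl : h m j = g := by
    by_contra hne
    exact Finset.disjoint_left.1 (hdisj m _ _ hne) (hmem m j) hjA
  exact mem_sel.1 hjS m

lemma card_inter_mul_le_sum (t : Fin M → ℝ≥0∞) {m : Fin M} (B : Finset (Fin (G m))) :
    ((selGrp A (sel h e t) m ∩ B).card : ℝ≥0∞) * t m ≤ ∑ g ∈ B, e m g :=
  calc ((selGrp A (sel h e t) m ∩ B).card : ℝ≥0∞) * t m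
      = ∑ _g ∈ selGrp A (sel h e t) m ∩ B, t m := by rw [Finset.sum_const, nsmul_eq_mul]
    _ ≤ ∑ g ∈ selGrp A (sel h e t) m ∩ B, e m g :=
      Finset.sum_le_sum fun g hg =>
        le_of_mem_selGrp_sel hdisj hmem (Finset.mem_of_mem_inter_left hg)
    _ ≤ ∑ g ∈ B, e m g := Finset.sum_le_sum_of_subset Finset.inter_subset_right

lemma natCast_mul_FDP_output_le (H0 : Finset (Fin N)) {m : Fin M} (hα : 0 < α m) :
    (G m : ℝ≥0∞) * FDP A H0 (output A h e α) m ≤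
      ENNReal.ofReal (α m) * ∑ g ∈ nullGrp A H0 m, e m g := by
  set a := ENNReal.ofReal (α m)
  set t := filterThreshold A h e α
  set D : ℝ≥0∞ := ((max (selGrp A (output A h e α) m).card 1 : ℕ) : ℝ≥0∞)
  set K : ℝ≥0∞ := ((selGrp A (output A h e α) m ∩ nullGrp A H0 m).card : ℝ≥0∞)
  have hD : D ≠ 0 := by positivity
  rw [FDP, ← mul_div_assoc, ENNReal.div_le_iff_le_mul (.inl hD) (.inl (ENNReal.natCast_ne_top _))]
  calc (G m : ℝ≥0∞) * K ≤ a * D * t m * K :=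
        mul_le_mul_left (natCast_le_mul_filterThreshold hα) K
    _ = a * D * (K * t m) := by ring
    _ ≤ a * D * ∑ g ∈ nullGrp A H0 m, e m g :=
        mul_le_mul_right (card_inter_mul_le_sum hdisj hmem t _) _
    _ = a * (∑ g ∈ nullGrp A H0 m, e m g) * D := by ring

end

theorem stmt7_general {N M : ℕ} {G : Fin M → ℕ}
    (A : (m : Fin M) → Fin (G m) → Finset (Fin N))
    (h : (m : Fin M) → Fin N → Fin (G m))
    (hdisj : ∀ m, ∀ g₁ g₂ : Fin (G m), g₁ ≠ g₂ → Disjoint (A m g₁) (A m g₂))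
    (hmem : ∀ m j, j ∈ A m (h m j))
    (H0 : Finset (Fin N))
    {Ω : Type*} [MeasurableSpace Ω] (P : Measure Ω)
    (e : Ω → (m : Fin M) → Fin (G m) → ℝ≥0∞)
    (hmeas : ∀ m g, Measurable fun ω => e ω m g)
    (hrelax : ∀ m, ∑ g ∈ nullGrp A H0 m, ∫⁻ ω, e ω m g ∂P ≤ (G m : ℝ≥0∞))
    (α : Fin M → ℝ) (hα : ∀ m, α m ∈ Set.Ioo (0 : ℝ) 1) :
    ∀ m, (∫⁻ ω, FDP A H0 (output A h (e ω) α) m ∂P) ≤ ENNReal.ofReal (α m) := by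
  intro m
  rcases Nat.eq_zero_or_pos (G m) with hG | hG
  · simp [FDP_eq_zero_of_eq_zero _ _ hG]
  have hG0 : (G m : ℝ≥0∞) ≠ 0 := by positivity
  refine (ENNReal.mul_le_mul_iff_right hG0 (ENNReal.natCast_ne_top _)).1 ?_
  calc (G m : ℝ≥0∞) * ∫⁻ ω, FDP A H0 (output A h (e ω) α) m ∂P
      = ∫⁻ ω, (G m : ℝ≥0∞) * FDP A H0 (output A h (e ω) α) m ∂P :=
        (lintegral_const_mul' _ _ (ENNReal.natCast_ne_top _)).symm
    _ ≤ ∫⁻ ω, ENNReal.ofReal (α m) * ∑ g ∈ nullGrp A H0 m, e ω m g ∂P :=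
        lintegral_mono fun ω => natCast_mul_FDP_output_le hdisj hmem H0 (hα m).1
    _ = ENNReal.ofReal (α m) * ∑ g ∈ nullGrp A H0 m, ∫⁻ ω, e ω m g ∂P := by
        rw [lintegral_const_mul' _ _ ENNReal.ofReal_ne_top,
          lintegral_finsetSum _ fun g _ => hmeas m g]
    _ ≤ ENNReal.ofReal (α m) * G m := mul_le_mul_right (hrelax m) _
    _ = G m * ENNReal.ofReal (α m) := mul_comm _ _

theorem stmt7 {N M : ℕ} (hN : 1 ≤ N) (hM : 1 ≤ M) {G : Fin M → ℕ}
    (A : (m : Fin M) → Fin (G m) → Finset (Fin N))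
    (h : (m : Fin M) → Fin N → Fin (G m))
    (hne : ∀ m g, (A m g).Nonempty)
    (hdisj : ∀ m, ∀ g₁ g₂ : Fin (G m), g₁ ≠ g₂ → Disjoint (A m g₁) (A m g₂))
    (hmem : ∀ m j, j ∈ A m (h m j))
    (H0 : Finset (Fin N))
    {Ω : Type*} [MeasurableSpace Ω] (P : Measure Ω) [IsProbabilityMeasure P]
    (e : Ω → (m : Fin M) → Fin (G m) → ℝ≥0∞)
    (hmeas : ∀ m g, Measurable fun ω => e ω m g)
    (hfin : ∀ ω m g, e ω m g ≠ ⊤)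
    (hrelax : ∀ m, ∑ g ∈ nullGrp A H0 m, ∫⁻ ω, e ω m g ∂P ≤ (G m : ℝ≥0∞))
    (α : Fin M → ℝ) (hα : ∀ m, α m ∈ Set.Ioo (0 : ℝ) 1) :
    ∀ m, (∫⁻ ω, FDP A H0 (output A h (e ω) α) m ∂P) ≤ ENNReal.ofReal (α m) :=
  stmt7_general A h hdisj hmem H0 P e hmeas hrelax α hα

end MultilayerEFilter
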